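/- arXiv:1503.09021 — 2 statements merged into one kernel-verified Lean document; each statement's English description precedes it below -/
import Mathlib

section
/- Let n ≥ 3, let p : Fin n → ℝ² be a strictly convex polygon, and let d ∈ ℝ² be a nonzero vector such that ⟨d, p(i+1) − p(i)⟩ ≠ 0 for every index i (indices mod n), i.e., no edge of p is orthogonal to d. Then p is d-monotone. -/
/-!
Let `s` and `t` be vertices minimising and maximising `⟨d, ·⟩`. If `⟨d, ·⟩` rises along the edge
into a vertex `u` and falls along the edge out of it, strict convexity places every other vertex
in the open cone at `u` spanned by the reversed incoming edge and the outgoing edge, so `u` is the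
unique maximum. Since no edge is flat, walking from `s` in either direction the height therefore
cannot start to fall before reaching `t`.
-/

noncomputable section

/-- Cross product of two planar vectors: cross((a,b),(c,d)) = a·d − b·c. -/
def cross (a b : ℝ × ℝ) : ℝ := a.1 * b.2 - a.2 * b.1

/-- Standard inner product on ℝ². -/
def inner2 (a b : ℝ × ℝ) : ℝ := a.1 * b.1 + a.2 * b.2

/-- `p` is a counterclockwise convex polygon: pairwise distinct vertices and
`cross (p(i+1) − p(i)) (p(j) − p(i)) ≥ 0` for all `i` and all `j ∉ {i, i+1}`. -/
def IsCCWConvex {n : ℕ} [NeZero n] (p : Fin n → ℝ × ℝ) : Prop :=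
  Function.Injective p ∧
    ∀ i j : Fin n, j ≠ i → j ≠ i + 1 → 0 ≤ cross (p (i + 1) - p i) (p j - p i)

/-- `p` is a counterclockwise strictly convex polygon. -/
def IsCCWStrictConvex {n : ℕ} [NeZero n] (p : Fin n → ℝ × ℝ) : Prop :=
  Function.Injective p ∧
    ∀ i j : Fin n, j ≠ i → j ≠ i + 1 → 0 < cross (p (i + 1) - p i) (p j - p i)

/-- `p` is a convex polygon: it or its index-reversal is counterclockwise convex. -/
def IsConvexPolygon {n : ℕ} [NeZero n] (p : Fin n → ℝ × ℝ) : Prop :=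
  IsCCWConvex p ∨ IsCCWConvex (p ∘ Fin.rev)

/-- `p` is a strictly convex polygon: it or its index-reversal is
counterclockwise strictly convex. -/
def IsStrictConvexPolygon {n : ℕ} [NeZero n] (p : Fin n → ℝ × ℝ) : Prop :=
  IsCCWStrictConvex p ∨ IsCCWStrictConvex (p ∘ Fin.rev)

open Fin.NatCast in
/-- The polygon `p` is `d`-monotone: there are indices `s ≠ t` such that both of
the two paths from `s` to `t` around the cyclic sequence (one in each cyclic
direction) have strictly increasing inner product with `d` along the traversal. -/
def PolyMonotoneIn {n : ℕ} [NeZero n] (d : ℝ × ℝ) (p : Fin n → ℝ × ℝ) : Prop :=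
  ∃ s t : Fin n, s ≠ t ∧
    (∀ k : ℕ, k < ((t - s : Fin n) : ℕ) →
      inner2 d (p (s + (k : Fin n))) < inner2 d (p (s + (k : Fin n) + 1))) ∧
    (∀ k : ℕ, k < ((s - t : Fin n) : ℕ) →
      inner2 d (p (s - (k : Fin n))) < inner2 d (p (s - (k : Fin n) - 1)))

open Fin.NatCast Fin.CommRing

lemma inner2_sub (d x y : ℝ × ℝ) : inner2 d (x - y) = inner2 d x - inner2 d y := by
  simp only [inner2, Prod.fst_sub, Prod.snd_sub]; ring

lemma cross_sub_left (a b c : ℝ × ℝ) : cross (b - a) (c - a) = cross (b - a) (c - b) := by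
  simp only [cross, Prod.fst_sub, Prod.snd_sub]; ring

lemma cross_neg_left (a b : ℝ × ℝ) : cross (-a) b = -cross a b := by
  simp only [cross, Prod.fst_neg, Prod.snd_neg]; ring

/-- Cramer's rule for `w` in the basis `a, b`, paired with `d`. -/
lemma cross_mul_inner2 (a b d w : ℝ × ℝ) :
    cross a b * inner2 d w = cross w b * inner2 d a + cross a w * inner2 d b := by
  simp only [cross, inner2]; ring

variable {n : ℕ} [NeZero n]

def PeakIsStrictMax (f : Fin n → ℝ) : Prop :=
  ∀ u, f (u - 1) < f u → f (u + 1) < f u → ∀ q ≠ u, f q < f u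

lemma PeakIsStrictMax.comp_sub {f : Fin n → ℝ} (hf : PeakIsStrictMax f) (c : Fin n) :
    PeakIsStrictMax fun i => f (c - i) := by
  intro u h1 h2 q hq
  dsimp only at h1 h2 ⊢
  rw [show c - (u - 1) = c - u + 1 by ring] at h1
  rw [show c - (u + 1) = c - u - 1 by ring] at h2
  exact hf (c - u) h2 h1 (c - q) (by simpa using hq)

theorem IsCCWStrictConvex.peakIsStrictMax {p : Fin n → ℝ × ℝ} (hp : IsCCWStrictConvex p)
    (d : ℝ × ℝ) : PeakIsStrictMax fun i => inner2 d (p i) := by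
  intro u h1 h2 q hq
  by_cases hq₁ : q = u - 1
  · exact hq₁ ▸ h1
  by_cases hq₂ : q = u + 1
  · exact hq₂ ▸ h2
  set α := p u - p (u - 1)
  set β := p (u + 1) - p u
  set w := p q - p u
  have hu : u - 1 + 1 = u := sub_add_cancel u 1
  have hαw : 0 < cross α w := by
    simpa only [hu, cross_sub_left] using hp.2 (u - 1) q hq₁ (by rwa [hu])
  have hβw : 0 < cross β w := hp.2 u q hq hq₂
  have hαβ : 0 < cross α β := by
    have hne : u + 1 ≠ u := fun h => (h ▸ h2).false
    by_cases hback : u + 1 = u - 1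
    · -- for `n = 2` the two edges at `u` are opposite, and cannot both turn left towards `q`
      have : β = -α := by simp only [β, α, hback, neg_sub]
      rw [this, cross_neg_left] at hβw
      linarith
    simpa only [hu, cross_sub_left] using hp.2 (u - 1) (u + 1) hback (by rwa [hu])
  -- `w` lies in the open cone spanned by `-α` and `β`, where `⟨d, ·⟩` is negative
  have hw : cross α β * inner2 d w < 0 := by
    rw [cross_mul_inner2]
    have hα : 0 < inner2 d α := by rw [inner2_sub]; linarith
    have hβ : inner2 d β < 0 := by rw [inner2_sub]; linarith
    have hwβ : cross w β = -cross β w := by simp only [cross]; ring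
    nlinarith
  have : inner2 d w < 0 := neg_of_mul_neg_right hw hαβ.le
  rw [inner2_sub] at this
  linarith

lemma Fin.rev_eq_rev_zero_sub (i : Fin n) : Fin.rev i = Fin.rev 0 - i := by
  simpa using Fin.rev_add 0 i

theorem IsStrictConvexPolygon.peakIsStrictMax {p : Fin n → ℝ × ℝ}
    (hp : IsStrictConvexPolygon p) (d : ℝ × ℝ) : PeakIsStrictMax fun i => inner2 d (p i) := by
  rcases hp with hp | hp
  · exact hp.peakIsStrictMax d
  · have := (hp.peakIsStrictMax d).comp_sub (Fin.rev 0)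
    simpa only [Function.comp_apply, ← Fin.rev_eq_rev_zero_sub, Fin.rev_rev] using this

/-- The first descent after `s` would be a peak other than `t`. -/
lemma PeakIsStrictMax.lt_add_one_of_lt {f : Fin n → ℝ} (hf : PeakIsStrictMax f)
    (hstep : ∀ i, f (i + 1) ≠ f i) {s t : Fin n} (hs : ∀ i, f s ≤ f i) (ht : ∀ i, f i ≤ f t) :
    ∀ k : ℕ, k < ((t - s : Fin n) : ℕ) → f (s + k) < f (s + k + 1) := by
  intro k hk
  induction k with
  | zero => simpa using lt_of_le_of_ne (hs (s + 1)) (hstep s).symm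
  | succ k ih =>
    have hpeak_ne : s + ((k + 1 : ℕ) : Fin n) ≠ t := by
      intro h
      have : (((k + 1 : ℕ) : Fin n) : ℕ) = k + 1 := Fin.val_cast_of_lt (hk.trans (t - s).isLt)
      rw [← h, add_sub_cancel_left] at hk
      omega
    have hprev : s + ((k + 1 : ℕ) : Fin n) - 1 = s + k := by push_cast; ring
    have hup : f (s + ((k + 1 : ℕ) : Fin n) - 1) < f (s + ((k + 1 : ℕ) : Fin n)) := by
      rw [hprev]; push_cast; rw [← add_assoc]; exact ih (by omega)
    refine lt_of_le_of_ne (not_lt.mp fun hdown => ?_) (hstep _).symm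
    exact (hf _ hup hdown t hpeak_ne.symm).not_ge (ht _)

theorem polyMonotoneIn_of_peakIsStrictMax {d : ℝ × ℝ} {p : Fin n → ℝ × ℝ}
    (hf : PeakIsStrictMax fun i => inner2 d (p i))
    (hedge : ∀ i : Fin n, inner2 d (p (i + 1) - p i) ≠ 0) : PolyMonotoneIn d p := by
  set f : Fin n → ℝ := fun i => inner2 d (p i)
  have hstep : ∀ i, f (i + 1) ≠ f i := fun i => by
    simpa only [inner2_sub, sub_ne_zero] using hedge i
  obtain ⟨s, hs⟩ := Finite.exists_min f
  obtain ⟨t, ht⟩ := Finite.exists_max f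
  have hst : s ≠ t := fun h => hstep s (le_antisymm (h ▸ ht _) (hs _))
  refine ⟨s, t, hst, hf.lt_add_one_of_lt hstep hs ht, fun k hk => ?_⟩
  have hstep' : ∀ i, f (0 - (i + 1)) ≠ f (0 - i) := fun i => by
    simpa only [zero_sub, neg_add', sub_add_cancel] using (hstep (-i - 1)).symm
  have := (hf.comp_sub 0).lt_add_one_of_lt hstep' (s := -s) (t := -t)
    (fun i => by simpa using hs (-i)) (fun i => by simpa using ht (-i)) k (by rwa [neg_sub_neg])
  simpa only [zero_sub, neg_add, neg_neg, ← sub_eq_add_neg] using this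

theorem strictConvex_polygon_monotone_of_no_horizontal_edge_general {n : ℕ} [NeZero n]
    (p : Fin n → ℝ × ℝ) (hp : IsStrictConvexPolygon p)
    (d : ℝ × ℝ)
    (hedge : ∀ i : Fin n, inner2 d (p (i + 1) - p i) ≠ 0) :
    PolyMonotoneIn d p :=
  polyMonotoneIn_of_peakIsStrictMax (hp.peakIsStrictMax d) hedge

/-- If `p` is a strictly convex polygon and `d ≠ 0` is not orthogonal to any
edge of `p`, then `p` is `d`-monotone. -/
theorem strictConvex_polygon_monotone_of_no_horizontal_edge {n : ℕ} [NeZero n]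
    (hn : 3 ≤ n) (p : Fin n → ℝ × ℝ) (hp : IsStrictConvexPolygon p)
    (d : ℝ × ℝ) (hd : d ≠ 0)
    (hedge : ∀ i : Fin n, inner2 d (p (i + 1) - p i) ≠ 0) :
    PolyMonotoneIn d p :=
  strictConvex_polygon_monotone_of_no_horizontal_edge_general p hp d hedge
end
end

section
/- Let y_z < y_u < y_v be real numbers and let u₀, u₁, v₀, v₁, z₀, z₁ ∈ ℝ² be points whose second coordinates satisfy (u₀).2 = (u₁).2 = y_u, (v₀).2 = (v₁).2 = y_v, and (z₀).2 = (z₁).2 = y_z. For t ∈ [0,1] set u_t = (1−t)·u₀ + t·u₁, v_t = (1−t)·v₀ + t·v₁, and z_t = (1−t)·z₀ + t·z₁. If cross(v₀ − u₀, z₀ − u₀) > 0 and cross(v₁ − u₁, z₁ − u₁) > 0, then cross(v_t − u_t, z_t − u_t) > 0 for every t ∈ [0,1]. (Equivalently: during a linear morph in which each of the three points stays on its own fixed horizontal line, if the angle of the clockwise rotation around u that brings the segment uv onto the segment uz is smaller than π radians at both endpoints of the morph, then it is smaller than π radians at every time instant.) -/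
noncomputable section

/-! Since the vertical components of `v - u` and `z - u` do not move, the cross product is
affine in `t`; on `[0, 1]` it is a convex combination of its two positive endpoint values. -/

lemma convex_comb_sub_convex_comb {M : Type*} [AddCommGroup M] [Module ℝ M]
    (a₀ a₁ b₀ b₁ : M) (t : ℝ) :
    ((1 - t) • a₀ + t • a₁) - ((1 - t) • b₀ + t • b₁) = (1 - t) • (a₀ - b₀) + t • (a₁ - b₁) := by
  module

lemma cross_convex_comb_of_snd_eq {a₀ a₁ b₀ b₁ : ℝ × ℝ} (ha : a₀.2 = a₁.2) (hb : b₀.2 = b₁.2)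
    (t : ℝ) :
    cross ((1 - t) • a₀ + t • a₁) ((1 - t) • b₀ + t • b₁)
      = (1 - t) * cross a₀ b₀ + t * cross a₁ b₁ := by
  simp only [cross, Prod.fst_add, Prod.snd_add, Prod.smul_fst, Prod.smul_snd, smul_eq_mul,
    ← ha, ← hb]
  ring

theorem cross_pos_during_level_morph_general (y_z y_u y_v : ℝ)
    (u₀ u₁ v₀ v₁ z₀ z₁ : ℝ × ℝ)
    (hu₀ : u₀.2 = y_u) (hu₁ : u₁.2 = y_u)
    (hv₀ : v₀.2 = y_v) (hv₁ : v₁.2 = y_v)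
    (hz₀ : z₀.2 = y_z) (hz₁ : z₁.2 = y_z)
    (h0 : 0 < cross (v₀ - u₀) (z₀ - u₀))
    (h1 : 0 < cross (v₁ - u₁) (z₁ - u₁)) :
    ∀ t ∈ Set.Icc (0 : ℝ) 1,
      0 < cross (((1 - t) • v₀ + t • v₁) - ((1 - t) • u₀ + t • u₁))
            (((1 - t) • z₀ + t • z₁) - ((1 - t) • u₀ + t • u₁)) := by
  rintro t ⟨ht0, ht1⟩
  have hvu : (v₀ - u₀).2 = (v₁ - u₁).2 := by simp [hu₀, hu₁, hv₀, hv₁]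
  have hzu : (z₀ - u₀).2 = (z₁ - u₁).2 := by simp [hu₀, hu₁, hz₀, hz₁]
  rw [convex_comb_sub_convex_comb, convex_comb_sub_convex_comb,
    cross_convex_comb_of_snd_eq hvu hzu]
  exact convex_Ioi (0 : ℝ) h0 h1 (sub_nonneg.2 ht1) ht0 (sub_add_cancel 1 t)

/-- During a linear morph where each of the points `u`, `v`, `z` stays on its
own fixed horizontal line (with `y_z < y_u < y_v`), if the orientation
`cross (v − u) (z − u)` is positive at both ends, it is positive throughout. -/
theorem cross_pos_during_level_morph (y_z y_u y_v : ℝ)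
    (hzu : y_z < y_u) (huv : y_u < y_v)
    (u₀ u₁ v₀ v₁ z₀ z₁ : ℝ × ℝ)
    (hu₀ : u₀.2 = y_u) (hu₁ : u₁.2 = y_u)
    (hv₀ : v₀.2 = y_v) (hv₁ : v₁.2 = y_v)
    (hz₀ : z₀.2 = y_z) (hz₁ : z₁.2 = y_z)
    (h0 : 0 < cross (v₀ - u₀) (z₀ - u₀))
    (h1 : 0 < cross (v₁ - u₁) (z₁ - u₁)) :
    ∀ t ∈ Set.Icc (0 : ℝ) 1,
      0 < cross (((1 - t) • v₀ + t • v₁) - ((1 - t) • u₀ + t • u₁))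
            (((1 - t) • z₀ + t • z₁) - ((1 - t) • u₀ + t • u₁)) :=
  cross_pos_during_level_morph_general y_z y_u y_v u₀ u₁ v₀ v₁ z₀ z₁ hu₀ hu₁ hv₀ hv₁ hz₀ hz₁ h0 h1
end
end
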